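/- Suppose 1/2 < μ < 1 and x₀ ∈ [0,1] is such that T_μⁿ(x₀) = 1/2 for some integer n ≥ 0 (where T_μⁿ denotes the n-th iterate of T_μ). Then the commuter h_μ is discontinuous at x₀. -/

import Mathlib

open Set

/-- The symmetric tent map of height `μ`:
`T_μ(x) = 2μx` for `x ≤ 1/2` and `T_μ(x) = 2μ(1-x)` for `x > 1/2`. -/
noncomputable def tentMap (μ : ℝ) (x : ℝ) : ℝ :=
  if x ≤ 1/2 then 2*μ*x else 2*μ*(1-x)

/-- `h : [0,1] → [0,1]` satisfies the commuter functional equation for `T_μ`: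
`h(x) = (1/2)·h(2μx)` for `0 ≤ x ≤ 1/2` and `h(x) = 1 - (1/2)·h(2μ(1-x))` for `1/2 < x ≤ 1`. -/
def IsCommuter (μ : ℝ) (h : ℝ → ℝ) : Prop :=
  (∀ x ∈ Icc (0:ℝ) 1, h x ∈ Icc (0:ℝ) 1) ∧
  (∀ x : ℝ, 0 ≤ x → x ≤ 1/2 → h x = (1/2) * h (2*μ*x)) ∧
  (∀ x : ℝ, 1/2 < x → x ≤ 1 → h x = 1 - (1/2) * h (2*μ*(1-x)))

/-!
The commuter is bounded below by `1/2` on `(1/2, 1]`, so continuity at `1/2` would force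
`h(1/2) ≥ 1/2`. On the other hand `h(1/2) = h(μ)/2` and `h(μ) = 1 - h(2μ(1-μ))/2 < 1`, because `h`
vanishes nowhere on `(0, 1]`: a zero `y` would give zeros `(2μ)ᵏ y` for every `k`, all in `(0, 1/2]`.
Away from `1/2` the tent map is locally an affine bijection and the functional equation expresses `h`
near `T_μ x` affinely through `h` near `x`, so continuity at `x ≠ 1/2` passes to `T_μ x`; following
the orbit of `x₀` up to `1/2` gives the theorem.
-/

open Filter Topology

lemma tentMap_mem_Icc {μ x : ℝ} (hμ₀ : 0 ≤ μ) (hμ₁ : μ ≤ 1) (hx : x ∈ Icc (0:ℝ) 1) :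
    tentMap μ x ∈ Icc (0:ℝ) 1 := by
  obtain ⟨hx₀, hx₁⟩ := hx
  unfold tentMap
  split_ifs <;> constructor <;> nlinarith

lemma continuousWithinAt_of_eventuallyEq_affine_comp {h φ : ℝ → ℝ} {s : Set ℝ} {x₀ y₀ a b : ℝ}
    (hcont : ContinuousWithinAt h s x₀) (hφ : Continuous φ) (hφs : MapsTo φ s s)
    (hφy₀ : φ y₀ = x₀) (hy₀ : y₀ ∈ s) (heq : ∀ᶠ y in 𝓝[s] y₀, h y = a + b * h (φ y)) :
    ContinuousWithinAt h s y₀ := by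
  subst hφy₀
  exact (continuousWithinAt_const.add (continuousWithinAt_const.mul
    (hcont.comp hφ.continuousWithinAt hφs))).congr_of_eventuallyEq_of_mem heq hy₀

namespace IsCommuter

variable {μ : ℝ} {h : ℝ → ℝ}

lemma half_le_apply (hc : IsCommuter μ h) (hμ₀ : 0 ≤ μ) (hμ₁ : μ ≤ 1) {y : ℝ}
    (hy : y ∈ Ioc (1/2 : ℝ) 1) : 1/2 ≤ h y := by
  obtain ⟨hy₀, hy₁⟩ := hy
  have hle : h (2*μ*(1-y)) ≤ 1 := (hc.1 _ ⟨by nlinarith, by nlinarith⟩).2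
  rw [hc.2.2 y hy₀ hy₁]
  linarith

lemma apply_two_mul_eq_zero (hc : IsCommuter μ h) (hμ₀ : 0 < μ) (hμ₁ : μ ≤ 1) {y : ℝ}
    (hy : y ∈ Ioc (0:ℝ) 1) (hy₀ : h y = 0) : 2*μ*y ∈ Ioc (0:ℝ) 1 ∧ h (2*μ*y) = 0 := by
  have hy_le : y ≤ 1/2 := by
    by_contra! hlt
    linarith [hc.half_le_apply hμ₀.le hμ₁ ⟨hlt, hy.2⟩]
  have heq := hc.2.1 y hy.1.le hy_le
  exact ⟨⟨by nlinarith [hy.1], by nlinarith⟩, by linarith⟩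

lemma apply_pos (hc : IsCommuter μ h) (hμ₀ : 1/2 < μ) (hμ₁ : μ ≤ 1) {y : ℝ}
    (hy : y ∈ Ioc (0:ℝ) 1) : 0 < h y := by
  refine (hc.1 y (Ioc_subset_Icc_self hy)).1.lt_of_ne' fun hy₀ ↦ ?_
  have horbit : ∀ k : ℕ, (2*μ)^k * y ∈ Ioc (0:ℝ) 1 ∧ h ((2*μ)^k * y) = 0 := by
    intro k
    induction k with
    | zero => simpa using ⟨hy, hy₀⟩
    | succ k ih =>
      rw [pow_succ', mul_assoc]
      exact hc.apply_two_mul_eq_zero (by linarith) hμ₁ ih.1 ih.2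
  obtain ⟨k, hk⟩ := pow_unbounded_of_one_lt y⁻¹ (by linarith : (1:ℝ) < 2*μ)
  have hle := (horbit k).1.2
  rw [inv_lt_iff_one_lt_mul₀ hy.1] at hk
  linarith

lemma apply_half_lt_half (hc : IsCommuter μ h) (hμ₀ : 1/2 < μ) (hμ₁ : μ < 1) :
    h (1/2) < 1/2 := by
  have hhalf : h (1/2) = 1/2 * h μ := by
    rw [hc.2.1 (1/2) (by norm_num) le_rfl, show 2*μ*(1/2) = μ by ring]
  have hμ : h μ = 1 - 1/2 * h (2*μ*(1-μ)) := hc.2.2 μ hμ₀ hμ₁.le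
  have hpos : 0 < h (2*μ*(1-μ)) := hc.apply_pos hμ₀ hμ₁.le ⟨by nlinarith, by nlinarith⟩
  linarith

lemma not_continuousWithinAt_half (hc : IsCommuter μ h) (hμ₀ : 1/2 < μ) (hμ₁ : μ < 1) :
    ¬ ContinuousWithinAt h (Icc (0:ℝ) 1) (1/2) := by
  intro hcont
  have hclosure : (1/2 : ℝ) ∈ closure (Ioc (1/2 : ℝ) 1) := by
    rw [closure_Ioc (by norm_num)]
    norm_num
  have hge : 1/2 ≤ h (1/2) :=
    ContinuousWithinAt.closure_le hclosure continuousWithinAt_const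
      (hcont.mono fun y hy ↦ ⟨by linarith [hy.1], hy.2⟩)
      fun y hy ↦ hc.half_le_apply (by linarith) hμ₁.le hy
  linarith [hc.apply_half_lt_half hμ₀ hμ₁]

lemma apply_eq_two_mul_apply_div (hc : IsCommuter μ h) (hμ : 0 < μ) {y : ℝ} (hy₀ : 0 ≤ y)
    (hyμ : y ≤ μ) : h y = 2 * h (y / (2*μ)) := by
  have heq := hc.2.1 (y / (2*μ)) (by positivity) (by rw [div_le_iff₀ (by positivity)]; linarith)
  rw [mul_div_cancel₀ y (by positivity)] at heq
  linarith

lemma apply_eq_two_sub_two_mul_apply_one_sub_div (hc : IsCommuter μ h) (hμ : 0 < μ) {y : ℝ}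
    (hy₀ : 0 ≤ y) (hyμ : y < μ) : h y = 2 - 2 * h (1 - y / (2*μ)) := by
  have hlt : y / (2*μ) < 1/2 := by rw [div_lt_iff₀ (by positivity)]; linarith
  have hnonneg : 0 ≤ y / (2*μ) := by positivity
  have heq := hc.2.2 (1 - y / (2*μ)) (by linarith) (by linarith)
  rw [sub_sub_cancel, mul_div_cancel₀ y (by positivity)] at heq
  linarith

lemma continuousWithinAt_tentMap (hc : IsCommuter μ h) (hμ₀ : 1/2 < μ) (hμ₁ : μ ≤ 1) {x : ℝ}
    (hx : x ∈ Icc (0:ℝ) 1) (hne : x ≠ 1/2) (hcont : ContinuousWithinAt h (Icc (0:ℝ) 1) x) :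
    ContinuousWithinAt h (Icc (0:ℝ) 1) (tentMap μ x) := by
  have hμ : 0 < μ := by linarith
  have hTx := tentMap_mem_Icc hμ.le hμ₁ hx
  have hdiv : MapsTo (fun y ↦ y / (2*μ)) (Icc (0:ℝ) 1) (Icc 0 1) := fun y hy ↦
    ⟨div_nonneg hy.1 (by positivity), (div_le_one (by positivity)).2 (by linarith [hy.2])⟩
  -- both inverse branches of the functional equation are valid on `[0, μ)`
  have hnear : ∀ᶠ y in 𝓝[Icc (0:ℝ) 1] tentMap μ x, 0 ≤ y ∧ y < μ := by
    have hlt : tentMap μ x < μ := by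
      unfold tentMap
      split_ifs <;> cases lt_or_gt_of_ne hne <;> nlinarith [hx.1, hx.2]
    filter_upwards [self_mem_nhdsWithin, mem_nhdsWithin_of_mem_nhds (Iio_mem_nhds hlt)]
      with y hy hyμ using ⟨hy.1, hyμ⟩
  rcases lt_or_gt_of_ne hne with hlt | hgt
  · have hT : tentMap μ x = 2*μ*x := if_pos hlt.le
    refine continuousWithinAt_of_eventuallyEq_affine_comp (a := 0) (b := 2) hcont
      (by fun_prop) hdiv ?_ hTx (hnear.mono fun y hy ↦ ?_)
    · rw [hT]; field_simp
    · rw [zero_add]; exact hc.apply_eq_two_mul_apply_div hμ hy.1 hy.2.le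
  · have hT : tentMap μ x = 2*μ*(1-x) := if_neg (not_le.2 hgt)
    refine continuousWithinAt_of_eventuallyEq_affine_comp (a := 2) (b := -2)
      (φ := fun y ↦ 1 - y / (2*μ)) hcont (by fun_prop) ?_ ?_ hTx (hnear.mono fun y hy ↦ ?_)
    · intro y hy
      have := hdiv hy
      exact ⟨by linarith [this.2], by linarith [this.1]⟩
    · rw [hT]; field_simp; ring
    · rw [hc.apply_eq_two_sub_two_mul_apply_one_sub_div hμ hy.1 hy.2]; ring

end IsCommuter

theorem commuter_discontinuous_at_preimage (μ : ℝ) (hμ1 : 1/2 < μ) (hμ2 : μ < 1)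
    (h : ℝ → ℝ) (hc : IsCommuter μ h)
    (x₀ : ℝ) (hx₀ : x₀ ∈ Icc (0:ℝ) 1)
    (n : ℕ) (hn : (tentMap μ)^[n] x₀ = 1/2) :
    ¬ ContinuousWithinAt h (Icc (0:ℝ) 1) x₀ := by
  induction n generalizing x₀ with
  | zero =>
    rw [Function.iterate_zero_apply] at hn
    exact hn ▸ hc.not_continuousWithinAt_half hμ1 hμ2
  | succ n ih =>
    rcases eq_or_ne x₀ (1/2) with rfl | hne
    · exact hc.not_continuousWithinAt_half hμ1 hμ2
    rw [Function.iterate_succ_apply] at hn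
    exact fun hcont ↦ ih _ (tentMap_mem_Icc (by linarith) hμ2.le hx₀) hn
      (hc.continuousWithinAt_tentMap hμ1 hμ2.le hx₀ hne hcont)
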